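/- arXiv:2104.05466 — 3 statements merged into one kernel-verified Lean document; each statement's English description precedes it below -/
import Mathlib

section
/- Let 0 < ε < 1/2. There exists a constant c(ε) > 0 such that for all x, y ∈ [ε, 1−ε], |√2·sin(πx) − √2·sin(πy)|² + |√2·sin(2πx) − √2·sin(2πy)|² ≥ c(ε)·|x − y|². -/
/-!
Put `a = π(x - y)/2` and `b = π(x + y)/2`. Sum-to-product turns the left-hand side into
`8 sin² a (cos² b + 4 cos² a cos² 2b)`. Jordan's inequality gives `sin² a ≥ (x - y)²`, and
`cos a ≥ sin(πε)` because `|a| ≤ π/2 - πε`. Finally `cos² b` and `cos² 2b = (2cos² b - 1)²`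
cannot both be below `1/4`, so the bracket is at least `min (1/4) (cos² a) ≥ sin²(πε)/4`.
-/

open Real

theorem sin_add_sub_sin_sub_sq_add_sq (a b : ℝ) :
    (sin (b + a) - sin (b - a)) ^ 2 + (sin (2 * (b + a)) - sin (2 * (b - a))) ^ 2 =
      4 * sin a ^ 2 * (cos b ^ 2 + 4 * cos a ^ 2 * cos (2 * b) ^ 2) := by
  have h₁ : sin (b + a) - sin (b - a) = 2 * sin a * cos b := by
    rw [sin_sub_sin]; ring_nf
  have h₂ : sin (2 * (b + a)) - sin (2 * (b - a)) = 2 * sin (2 * a) * cos (2 * b) := by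
    rw [sin_sub_sin]; ring_nf
  rw [h₁, h₂, sin_two_mul]
  ring

theorem min_le_cos_sq_add_mul_cos_two_mul_sq {t : ℝ} (ht : 0 ≤ t) (b : ℝ) :
    min (1 / 4) t ≤ cos b ^ 2 + 4 * t * cos (2 * b) ^ 2 := by
  rw [cos_two_mul]
  rcases le_or_gt (1 / 4) (cos b ^ 2) with hb | hb
  · nlinarith [min_le_left (1 / 4) t, mul_nonneg ht (sq_nonneg (2 * cos b ^ 2 - 1))]
  · have : 1 / 4 ≤ (2 * cos b ^ 2 - 1) ^ 2 := by nlinarith [sq_nonneg (cos b)]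
    nlinarith [min_le_right (1 / 4) t, sq_nonneg (cos b)]

theorem sq_le_sin_pi_div_two_mul_sq {t : ℝ} (ht : |t| ≤ 1) : t ^ 2 ≤ sin (π / 2 * t) ^ 2 := by
  have hJordan := le_sin_mul (abs_nonneg t) ht
  rcases abs_cases t with ⟨h, ht₀⟩ | ⟨h, ht₀⟩
  · rw [h] at hJordan; nlinarith
  · rw [h, mul_neg, sin_neg] at hJordan; nlinarith

theorem sin_pi_mul_le_cos_pi_div_two_mul {ε t : ℝ} (hε : 0 ≤ ε) (ht : |t| ≤ 1 - 2 * ε) :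
    sin (π * ε) ≤ cos (π / 2 * t) := by
  rw [← cos_abs, abs_mul, abs_of_pos (by positivity : (0 : ℝ) < π / 2), ← cos_pi_div_two_sub]
  apply cos_le_cos_of_nonneg_of_le_pi (by positivity) (by nlinarith [pi_pos])
  nlinarith [pi_pos]

theorem eigenfunctions_bilipschitz_below (ε : ℝ) (hε : 0 < ε) (hε' : ε < 1 / 2) :
    ∃ c > 0, ∀ x ∈ Set.Icc ε (1 - ε), ∀ y ∈ Set.Icc ε (1 - ε),
      |Real.sqrt 2 * Real.sin (π * x) - Real.sqrt 2 * Real.sin (π * y)| ^ 2 +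
        |Real.sqrt 2 * Real.sin (2 * π * x) - Real.sqrt 2 * Real.sin (2 * π * y)| ^ 2 ≥
      c * |x - y| ^ 2 := by
  have hE : 0 < sin (π * ε) := sin_pos_of_pos_of_lt_pi (by positivity) (by nlinarith [pi_pos])
  refine ⟨2 * sin (π * ε) ^ 2, by positivity, fun x hx y hy => ?_⟩
  set a := π / 2 * (x - y)
  set b := π / 2 * (x + y)
  have hxy : |x - y| ≤ 1 - 2 * ε := abs_le.2 ⟨by linarith [hx.1, hy.2], by linarith [hx.2, hy.1]⟩
  have hsin : (x - y) ^ 2 ≤ sin a ^ 2 := sq_le_sin_pi_div_two_mul_sq (by linarith)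
  have hcos : sin (π * ε) ≤ cos a := sin_pi_mul_le_cos_pi_div_two_mul hε.le hxy
  have hbracket : sin (π * ε) ^ 2 / 4 ≤ cos b ^ 2 + 4 * cos a ^ 2 * cos (2 * b) ^ 2 := by
    refine le_trans ?_ (min_le_cos_sq_add_mul_cos_two_mul_sq (sq_nonneg _) b)
    exact le_min (by nlinarith [sin_le_one (π * ε)]) (by nlinarith)
  have hx' : π * x = b + a := by ring
  have hy' : π * y = b - a := by ring
  have hLHS : |√2 * sin (π * x) - √2 * sin (π * y)| ^ 2 +
      |√2 * sin (2 * π * x) - √2 * sin (2 * π * y)| ^ 2 =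
        8 * sin a ^ 2 * (cos b ^ 2 + 4 * cos a ^ 2 * cos (2 * b) ^ 2) := by
    rw [sq_abs, sq_abs, ← mul_sub, ← mul_sub, mul_assoc 2 π, mul_assoc 2 π, hx', hy',
      mul_pow, mul_pow, sq_sqrt zero_le_two, ← mul_add, sin_add_sub_sin_sub_sq_add_sq]
    ring
  rw [hLHS, sq_abs, ge_iff_le]
  calc 2 * sin (π * ε) ^ 2 * (x - y) ^ 2 = 8 * (x - y) ^ 2 * (sin (π * ε) ^ 2 / 4) := by ring
    _ ≤ 8 * sin a ^ 2 * (cos b ^ 2 + 4 * cos a ^ 2 * cos (2 * b) ^ 2) := by gcongr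
end

section
/- If x, y ∈ (0,1) satisfy sin(kπx)/sin(kπy) equal for k = 1, 2, 3 (i.e., there exists λ₀ ≥ 0 with sin(kπx) = λ₀ sin(kπy) for k = 1,2,3 and sin(kπy) ≠ 0), then x = y. -/
open Real

theorem proportional_eigenfunctions_imp_eq (x y lam0 : ℝ)
    (hx : x ∈ Set.Ioo (0 : ℝ) 1) (hy : y ∈ Set.Ioo (0 : ℝ) 1) (hlam0 : 0 ≤ lam0)
    (hne : ∀ k ∈ ({1, 2, 3} : Set ℕ), Real.sin (k * π * y) ≠ 0)
    (hprop : ∀ k ∈ ({1, 2, 3} : Set ℕ), Real.sin (k * π * x) = lam0 * Real.sin (k * π * y)) :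
    x = y := by
  obtain ⟨hx0, hx1⟩ := hx
  obtain ⟨hy0, hy1⟩ := hy
  have hpi := Real.pi_pos
  have h1 := hprop 1 (by simp)
  have h2 := hprop 2 (by simp)
  have h3 := hprop 3 (by simp)
  push_cast at h1 h2 h3
  rw [one_mul] at h1
  have e2 : Real.sin (2 * (π * x)) = lam0 * Real.sin (2 * (π * y)) := by
    rw [show 2 * (π * x) = 2 * π * x by ring, show 2 * (π * y) = 2 * π * y by ring]; exact h2
  have e3 : Real.sin (3 * (π * x)) = lam0 * Real.sin (3 * (π * y)) := by
    rw [show 3 * (π * x) = 3 * π * x by ring, show 3 * (π * y) = 3 * π * y by ring]; exact h3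
  have sx : 0 < Real.sin (π * x) :=
    Real.sin_pos_of_pos_of_lt_pi (by positivity) (by nlinarith)
  have sy : 0 < Real.sin (π * y) :=
    Real.sin_pos_of_pos_of_lt_pi (by positivity) (by nlinarith)
  have hl : 0 < lam0 := by nlinarith
  rw [Real.sin_two_mul, Real.sin_two_mul] at e2
  rw [Real.sin_three_mul, Real.sin_three_mul] at e3
  have hcos : Real.cos (π * x) = Real.cos (π * y) := by
    have := e2
    rw [h1] at this
    have h' : lam0 * Real.sin (π * y) * (Real.cos (π * x) - Real.cos (π * y)) = 0 := by
      nlinarith [this]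
    have hne' : lam0 * Real.sin (π * y) ≠ 0 := by positivity
    have := mul_eq_zero.mp h'
    rcases this with h | h
    · exact absurd h hne'
    · linarith
  have hl1 : lam0 = 1 := by
    rw [h1] at e3
    have key : lam0 * Real.sin (π * y) ^ 3 * (lam0 ^ 2 - 1) = 0 := by linear_combination (-(1:ℝ)/4) * e3
    have h' : lam0 ^ 2 - 1 = 0 := by
      rcases mul_eq_zero.mp key with h | h
      · exact absurd h (by positivity)
      · exact h
    nlinarith
  have hsin : Real.sin (π * x) = Real.sin (π * y) := by rw [h1, hl1, one_mul]
  have : π * x = π * y := by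
    apply Real.injOn_cos ⟨by positivity, by nlinarith⟩ ⟨by positivity, by nlinarith⟩ hcos
  have := mul_left_cancel₀ (ne_of_gt hpi) this
  exact this
end

section
/- Let t_k = k·δt with δt = T/M, and fix 1 ≤ j < i ≤ M. Then Σ_{k=0}^{j−1} δt·(1/√(t_j − t_k) − 1/√(t_i − t_k)) ≤ 2√(t_i − t_j). -/
open Real

lemma key_term_bound (a b δ : ℝ) (hδ : 0 < δ) (hδa : δ ≤ a) (hab : a ≤ b) :
    δ * (1 / Real.sqrt a - 1 / Real.sqrt b) ≤
      (2 * Real.sqrt a - 2 * Real.sqrt (a - δ)) - (2 * Real.sqrt b - 2 * Real.sqrt (b - δ)) := by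
  have ha : (0:ℝ) < a := lt_of_lt_of_le hδ hδa
  have hb : (0:ℝ) < b := lt_of_lt_of_le ha hab
  set s1 := Real.sqrt a with hs1
  set s2 := Real.sqrt (a - δ) with hs2
  set s3 := Real.sqrt b with hs3
  set s4 := Real.sqrt (b - δ) with hs4
  have h1 : s1 ^ 2 = a := Real.sq_sqrt ha.le
  have h2 : s2 ^ 2 = a - δ := Real.sq_sqrt (by linarith)
  have h3 : s3 ^ 2 = b := Real.sq_sqrt hb.le
  have h4 : s4 ^ 2 = b - δ := Real.sq_sqrt (by linarith)
  have hp1 : 0 < s1 := Real.sqrt_pos.2 ha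
  have hp3 : 0 < s3 := Real.sqrt_pos.2 hb
  have hn2 : 0 ≤ s2 := Real.sqrt_nonneg _
  have hn4 : 0 ≤ s4 := Real.sqrt_nonneg _
  have h13 : s1 ≤ s3 := Real.sqrt_le_sqrt hab
  have h24 : s2 ≤ s4 := Real.sqrt_le_sqrt (by linarith)
  -- rewrite both sides
  have key : s1 * (s1 + s2) ^ 2 ≤ s3 * (s3 + s4) ^ 2 := by
    have : (s1 + s2) ^ 2 ≤ (s3 + s4) ^ 2 := by nlinarith
    nlinarith
  have hδ1 : (s1 - s2) * (s1 + s2) = δ := by linear_combination h1 - h2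
  have hδ3 : (s3 - s4) * (s3 + s4) = δ := by linear_combination h3 - h4
  have e1 : δ / s1 - 2 * (s1 - s2) = -(δ ^ 2 / (s1 * (s1 + s2) ^ 2)) := by
    have h12 : 0 < s1 + s2 := by linarith
    rw [← hδ1]; field_simp; ring
  have e3 : δ / s3 - 2 * (s3 - s4) = -(δ ^ 2 / (s3 * (s3 + s4) ^ 2)) := by
    have h34 : 0 < s3 + s4 := by linarith
    rw [← hδ3]; field_simp; ring
  have hfrac : δ ^ 2 / (s3 * (s3 + s4) ^ 2) ≤ δ ^ 2 / (s1 * (s1 + s2) ^ 2) := by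
    apply div_le_div_of_nonneg_left (by positivity) (by positivity) key
  have : δ / s1 - 2 * (s1 - s2) ≤ δ / s3 - 2 * (s3 - s4) := by
    rw [e1, e3]; linarith
  have hd1 : δ * (1 / s1) = δ / s1 := by ring
  have hd3 : δ * (1 / s3) = δ / s3 := by ring
  linarith [this]

theorem grid_sum_sqrt_difference_bound (T : ℝ) (M : ℕ) (hT : 0 < T) (hM : 0 < M)
    (δt : ℝ) (hδt : δt = T / M) (t : ℕ → ℝ) (ht : ∀ k, t k = k * δt)
    (i j : ℕ) (hj : 1 ≤ j) (hji : j < i) (hi : i ≤ M) :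
    (∑ k ∈ Finset.range j,
        δt * (1 / Real.sqrt (t j - t k) - 1 / Real.sqrt (t i - t k))) ≤
      2 * Real.sqrt (t i - t j) := by
  have hδpos : 0 < δt := by
    rw [hδt]; positivity
  set G : ℕ → ℝ := fun k => 2 * Real.sqrt (t i - t k) - 2 * Real.sqrt (t j - t k) with hG
  have hstep : ∀ k ∈ Finset.range j,
      δt * (1 / Real.sqrt (t j - t k) - 1 / Real.sqrt (t i - t k)) ≤ G (k + 1) - G k := by
    intro k hk
    rw [Finset.mem_range] at hk
    have hkj : (k : ℝ) + 1 ≤ j := by exact_mod_cast Nat.succ_le_of_lt hk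
    have hijr : (j : ℝ) ≤ i := by exact_mod_cast hji.le
    have ha : δt ≤ t j - t k := by
      rw [ht j, ht k]; nlinarith
    have hab : t j - t k ≤ t i - t k := by
      rw [ht j, ht i]; nlinarith
    have haδ : t j - t k - δt = t j - t (k + 1) := by
      rw [ht k, ht (k+1)]; push_cast; ring
    have hbδ : t i - t k - δt = t i - t (k + 1) := by
      rw [ht k, ht (k+1)]; push_cast; ring
    have := key_term_bound (t j - t k) (t i - t k) δt hδpos ha hab
    rw [haδ, hbδ] at this
    simp only [hG]
    linarith
  calc (∑ k ∈ Finset.range j,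
        δt * (1 / Real.sqrt (t j - t k) - 1 / Real.sqrt (t i - t k)))
      ≤ ∑ k ∈ Finset.range j, (G (k + 1) - G k) := Finset.sum_le_sum hstep
    _ = G j - G 0 := Finset.sum_range_sub G j
    _ ≤ 2 * Real.sqrt (t i - t j) := by
        have ht0 : t 0 = 0 := by rw [ht 0]; simp
        have hG0 : 0 ≤ G 0 := by
          simp only [hG, ht0, sub_zero]
          have : Real.sqrt (t j) ≤ Real.sqrt (t i) := by
            apply Real.sqrt_le_sqrt
            rw [ht j, ht i]
            have : (j : ℝ) ≤ i := by exact_mod_cast hji.le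
            nlinarith
          linarith
        have hGj : G j = 2 * Real.sqrt (t i - t j) := by
          simp only [hG, sub_self, Real.sqrt_zero, mul_zero, sub_zero]
        linarith
end
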